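/- For non-negative integers n > t, the (2t+1)-st power of the odd cycle C_{2n+1} is isomorphic to the circular complete graph K_{(2n+1)/(n−t)}. -/

import Mathlib

structure PGraph where
  V : Type
  Adj : V → V → Prop
  symm : ∀ u v, Adj u v → Adj v u

namespace PGraph

/-- There is a walk of length exactly `n` from `u` to `v`. -/
def walkLen (G : PGraph) : ℕ → G.V → G.V → Prop
  | 0, u, v => u = v
  | n+1, u, v => ∃ w, G.Adj u w ∧ G.walkLen n w v

theorem walkLen_concat (G : PGraph) : ∀ (n : ℕ) (u v w : G.V),
    G.walkLen n u v → G.Adj v w → G.walkLen (n+1) u w := by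
  intro n
  induction n with
  | zero =>
      intro u v w h hadj
      cases h
      exact ⟨w, hadj, rfl⟩
  | succ n ih =>
      rintro u v w ⟨x, hux, hxv⟩ hadj
      exact ⟨x, hux, ih x v w hxv hadj⟩

theorem walkLen_symm (G : PGraph) : ∀ (n : ℕ) (u v : G.V),
    G.walkLen n u v → G.walkLen n v u := by
  intro n
  induction n with
  | zero => intro u v h; exact h.symm
  | succ n ih =>
      rintro u v ⟨w, huw, hwv⟩
      exact G.walkLen_concat n v w u (ih w v hwv) (G.symm u w huw)

/-- The `k`-th power of a graph: same vertices, adjacency = existence of a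
walk of length exactly `k` (loops allowed). -/
def pow (G : PGraph) (k : ℕ) : PGraph where
  V := G.V
  Adj u v := G.walkLen k u v
  symm := G.walkLen_symm k

/-- Existence of a graph homomorphism. -/
def homTo (G H : PGraph) : Prop :=
  ∃ f : G.V → H.V, ∀ u v, G.Adj u v → H.Adj (f u) (f v)

/-- The `(2s+1)`-subdivision `S_{2s+1}(G)`: every edge is replaced by a path
of length `2s+1`.  Following the paper's notation, the ordered pair `(u,v)`
(with `u ~ v`) carries the `s` inner vertices `(uv)_1, …, (uv)_s`. -/
def subdiv (G : PGraph) (s : ℕ) : PGraph where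
  V := G.V ⊕ ({p : G.V × G.V // G.Adj p.1 p.2} × Fin s)
  Adj x y :=
    match x, y with
    | Sum.inl u, Sum.inl v => s = 0 ∧ G.Adj u v
    | Sum.inl u, Sum.inr (e, k) => u = e.1.2 ∧ (k : ℕ) = s - 1
    | Sum.inr (e, k), Sum.inl u => u = e.1.2 ∧ (k : ℕ) = s - 1
    | Sum.inr (e, k), Sum.inr (e', l) =>
        e'.1.1 = e.1.2 ∧ e'.1.2 = e.1.1 ∧
        ((k : ℕ) + (l : ℕ) + 2 = s ∨ (k : ℕ) + (l : ℕ) + 2 = s + 1)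
  symm := by
    rintro (u | ⟨e, k⟩) (v | ⟨e', l⟩) h
    · exact ⟨h.1, G.symm _ _ h.2⟩
    · exact h
    · exact h
    · obtain ⟨h1, h2, h3⟩ := h
      exact ⟨h2.symm, h1.symm, by omega⟩

/-- `q < og(G)`: the rational `q` is smaller than the odd girth of `G`
(the length of a shortest odd closed walk; vacuously true if `G` is bipartite). -/
def ltOddGirth (G : PGraph) (q : ℚ) : Prop :=
  ∀ n : ℕ, Odd n → (∃ v, G.walkLen n v v) → q < (n : ℚ)

/-- A graph is non-bipartite iff it contains an odd closed walk. -/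
def Nonbipartite (G : PGraph) : Prop :=
  ∃ (n : ℕ) (v : G.V), Odd n ∧ G.walkLen n v v

/-- The odd girth, as an extended natural number (`⊤` for bipartite graphs). -/
noncomputable def oddGirth (G : PGraph) : ℕ∞ :=
  sInf {N : ℕ∞ | ∃ n : ℕ, N = (n : ℕ∞) ∧ Odd n ∧ ∃ v, G.walkLen n v v}

/-- The complete graph on `m` vertices. -/
def completeGraph (m : ℕ) : PGraph :=
  ⟨Fin m, fun u v => u ≠ v, fun _ _ h => h.symm⟩

/-- The chromatic number: least `m` such that `G` maps homomorphically to `K_m`. -/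
noncomputable def chromatic (G : PGraph) : ℕ :=
  sInf {m : ℕ | G.homTo (completeGraph m)}

/-- The `i`-th power thickness
`θ_i(G) = sup { (2r+1)/(2s+1) | χ(G^{(2r+1)/(2s+1)}) ≤ χ(G)+i, (2r+1)/(2s+1) < og(G) }`. -/
noncomputable def powerThickness (G : PGraph) (i : ℤ) : ℝ :=
  sSup {x : ℝ | ∃ r s : ℕ, x = (2*(r:ℝ)+1)/(2*(s:ℝ)+1) ∧
    ((((G.subdiv s).pow (2*r+1)).chromatic : ℤ) ≤ (G.chromatic : ℤ) + i) ∧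
    G.ltOddGirth ((2*(r:ℚ)+1)/(2*(s:ℚ)+1))}

/-- The graph `H^{-1/(2r+1)}`. -/
def negPow (H : PGraph) (r : ℕ) : PGraph where
  V := {A : Fin (r+1) → Set H.V //
        (∃ v, A 0 = {v}) ∧
        ∀ i : Fin (r+1), (A i).Nonempty ∧ A i ⊆ {u | ∃ v ∈ A 0, H.walkLen i v u}}
  Adj A B :=
    (∀ i j : Fin (r+1), (j : ℕ) = (i : ℕ) + 1 → A.1 i ⊆ B.1 j ∧ B.1 i ⊆ A.1 j) ∧
    ∀ j : Fin (r+1), ∀ a ∈ A.1 j, ∀ b ∈ B.1 j, H.Adj a b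
  symm := by
    rintro A B ⟨h1, h2⟩
    exact ⟨fun i j hij => ⟨(h1 i j hij).2, (h1 i j hij).1⟩,
           fun j b hb a ha => H.symm _ _ (h2 j a ha b hb)⟩

/-- The circular complete graph `K_{n/d}`. -/
def circGraph (n d : ℕ) : PGraph where
  V := Fin n
  Adj u v := (d : ℤ) ≤ |(u : ℤ) - (v : ℤ)| ∧ |(u : ℤ) - (v : ℤ)| ≤ (n : ℤ) - d
  symm := by
    intro u v h
    rwa [abs_sub_comm]

/-- The circular chromatic number, as a real number. -/
noncomputable def circChrom (G : PGraph) : ℝ :=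
  sInf {x : ℝ | ∃ n d : ℕ, 0 < d ∧ 2 * d ≤ n ∧ Nat.gcd n d = 1 ∧
    x = (n : ℝ) / (d : ℝ) ∧ G.homTo (circGraph n d)}

/-- The cycle on `m` vertices. -/
def cycleGraph (m : ℕ) : PGraph :=
  ⟨ZMod m, fun i j => i = j + 1 ∨ j = i + 1, fun _ _ h => h.symm⟩

/-- Graph isomorphism. -/
def Isom (G H : PGraph) : Prop :=
  ∃ f : G.V ≃ H.V, ∀ u v, G.Adj u v ↔ H.Adj (f u) (f v)

/-- The helical graph `H(m,n,k)`. -/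
def helical (m n k : ℕ) : PGraph where
  V := {A : Fin k → Set (Fin m) //
        (∀ h : 0 < k, (A ⟨0, h⟩).ncard = n) ∧
        (∀ i, n ≤ (A i).ncard) ∧
        (∀ i : Fin k, ∀ h : (i : ℕ) + 1 < k, A i ∩ A ⟨(i : ℕ) + 1, h⟩ = ∅) ∧
        (∀ i : Fin k, ∀ h : (i : ℕ) + 2 < k, A i ⊆ A ⟨(i : ℕ) + 2, h⟩)}
  Adj A B :=
    (∀ i, A.1 i ∩ B.1 i = ∅) ∧
    (∀ i : Fin k, ∀ h : (i : ℕ) + 1 < k,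
      A.1 i ⊆ B.1 ⟨(i : ℕ) + 1, h⟩ ∧ B.1 i ⊆ A.1 ⟨(i : ℕ) + 1, h⟩)
  symm := by
    rintro A B ⟨h1, h2⟩
    refine ⟨fun i => ?_, fun i h => ⟨(h2 i h).2, (h2 i h).1⟩⟩
    rw [Set.inter_comm]
    exact h1 i

/-- A graph with chromatic number `k` is colorful if every proper `k`-coloring
admits a (nonempty) induced subgraph all of whose vertices see all `k` colors in
their closed neighborhood. -/
def Colorful (G : PGraph) : Prop :=
  ∀ c : G.V → Fin G.chromatic, (∀ u v, G.Adj u v → c u ≠ c v) →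
    ∃ S : Set G.V, S.Nonempty ∧
      ∀ v ∈ S, ∀ col : Fin G.chromatic,
        ∃ u ∈ S, (u = v ∨ G.Adj v u) ∧ c u = col

end PGraph

open PGraph

/-! Multiplication by `n + 1 = 2⁻¹` in `ZMod (2 * n + 1)` is the isomorphism. A walk of length
`2 * t + 1` on the cycle goes from `x` to `y` iff `y - x = 2 * a - (2 * t + 1)` for some
`0 ≤ a ≤ 2 * t + 1`; halving, this says `(n + 1) * (y - x) = a + n - t`, i.e. the residue of
`(n + 1) * (y - x)` lies in `[n - t, n + t + 1]`, which is adjacency in `K_{(2n+1)/(n-t)}`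
read off on differences modulo `2 * n + 1`. -/

namespace PGraph

theorem cycleGraph_walkLen_iff (N L : ℕ) (x y : ZMod N) :
    (cycleGraph N).walkLen L x y ↔ ∃ a ≤ L, y - x = 2 * a - L := by
  induction L generalizing x with
  | zero =>
    show x = y ↔ _
    simp [sub_eq_zero, eq_comm]
  | succ L ih =>
    show (∃ w : ZMod N, (x = w + 1 ∨ w = x + 1) ∧ (cycleGraph N).walkLen L w y) ↔ _
    simp only [ih]
    constructor
    · rintro ⟨w, hw | hw, a, ha, e⟩
      · exact ⟨a, by omega, by push_cast; linear_combination e - hw⟩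
      · exact ⟨a + 1, by omega, by push_cast; linear_combination e + hw⟩
    · rintro ⟨_ | a, ha, e⟩
      · refine ⟨x - 1, .inl (sub_add_cancel x 1).symm, 0, by omega, ?_⟩
        push_cast at e ⊢
        linear_combination e
      · refine ⟨x + 1, .inr rfl, a, by omega, ?_⟩
        push_cast at e ⊢
        linear_combination e

end PGraph

namespace ZMod

theorem two_mul_natCast_succ (n : ℕ) : (2 : ZMod (2 * n + 1)) * (n + 1) = 1 := by
  have hN : ((2 * n + 1 : ℕ) : ZMod (2 * n + 1)) = 0 := ZMod.natCast_self _
  push_cast at hN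
  linear_combination hN

def halfUnit (n : ℕ) : (ZMod (2 * n + 1))ˣ where
  val := n + 1
  inv := 2
  val_inv := (mul_comm _ _).trans (two_mul_natCast_succ n)
  inv_val := two_mul_natCast_succ n

theorem two_mul_eq_two_mul_sub_odd_iff (n t a : ℕ) (z : ZMod (2 * n + 1)) :
    2 * z = 2 * a - (2 * t + 1) ↔ z = a + n - t := by
  have hN : ((2 * n + 1 : ℕ) : ZMod (2 * n + 1)) = 0 := ZMod.natCast_self _
  push_cast at hN
  constructor
  · intro e
    linear_combination (n + 1 : ZMod (2 * n + 1)) * e + (a - t - 1 - z) * hN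
  · intro e
    linear_combination 2 * e + hN

def equivFin (N : ℕ) [NeZero N] : ZMod N ≃ Fin N where
  toFun x := ⟨x.val, x.val_lt⟩
  invFun i := (i : ℕ)
  left_inv := ZMod.natCast_zmod_val
  right_inv i := Fin.ext (ZMod.val_cast_of_lt i.isLt)

end ZMod

namespace PGraph

theorem circGraph_adj_equivFin_iff (N d : ℕ) [NeZero N] (x y : ZMod N) :
    (circGraph N d).Adj (ZMod.equivFin N x) (ZMod.equivFin N y) ↔
      d ≤ (y - x).val ∧ (y - x).val ≤ N - d := by
  show (d : ℤ) ≤ |(x.val : ℤ) - y.val| ∧ |(x.val : ℤ) - y.val| ≤ N - d ↔ _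
  rcases le_or_gt x.val y.val with hxy | hyx
  · rw [ZMod.val_sub hxy, abs_of_nonpos (by omega : (x.val : ℤ) - y.val ≤ 0)]
    omega
  · have hne : x - y ≠ 0 := sub_ne_zero.mpr fun e => (e ▸ hyx).false
    rw [← neg_sub x y, ZMod.neg_val, if_neg hne, ZMod.val_sub hyx.le,
      abs_of_pos (by omega : (0 : ℤ) < x.val - y.val)]
    have := x.val_lt
    omega

theorem cycleGraph_pow_adj_iff {n t : ℕ} (h : t < n) (x y : ZMod (2 * n + 1)) :
    ((cycleGraph (2 * n + 1)).pow (2 * t + 1)).Adj x y ↔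
      n - t ≤ ((n + 1) * (y - x)).val ∧ ((n + 1) * (y - x)).val ≤ n + t + 1 := by
  set z := (n + 1 : ZMod (2 * n + 1)) * (y - x)
  have hdiff : y - x = 2 * z := by
    simp only [z, ← mul_assoc, ZMod.two_mul_natCast_succ, one_mul]
  have hz : ∀ a ≤ 2 * t + 1,
      2 * z = 2 * a - ((2 * t + 1 : ℕ) : ZMod (2 * n + 1)) ↔ z.val = a + (n - t) := by
    intro a ha
    have hcast : (a + n - t : ZMod (2 * n + 1)) = ((a + (n - t) : ℕ) : ZMod (2 * n + 1)) := by
      push_cast [Nat.cast_sub h.le]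
      ring
    push_cast
    rw [ZMod.two_mul_eq_two_mul_sub_odd_iff, hcast, ← (ZMod.val_injective _).eq_iff,
      ZMod.val_cast_of_lt (by omega)]
  show (cycleGraph (2 * n + 1)).walkLen (2 * t + 1) x y ↔ _
  rw [cycleGraph_walkLen_iff, hdiff]
  calc _ ↔ ∃ a ≤ 2 * t + 1, z.val = a + (n - t) :=
        exists_congr fun a => and_congr_right (hz a)
    _ ↔ _ := ⟨fun ⟨a, ha, e⟩ => by omega,
        fun _ => ⟨z.val - (n - t), by omega, by omega⟩⟩

end PGraph

/-- For `n > t`, `C_{2n+1}^{2t+1} ≅ K_{(2n+1)/(n-t)}`. -/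
theorem cycle_pow_isom_circ (n t : ℕ) (h : t < n) :
    Isom ((cycleGraph (2 * n + 1)).pow (2 * t + 1)) (circGraph (2 * n + 1) (n - t)) := by
  refine ⟨(Units.mulLeft (ZMod.halfUnit n)).trans (ZMod.equivFin _),
    fun (x y : ZMod (2 * n + 1)) => ?_⟩
  have hcirc := circGraph_adj_equivFin_iff (2 * n + 1) (n - t) (ZMod.halfUnit n * x)
    (ZMod.halfUnit n * y)
  rw [← mul_sub, show 2 * n + 1 - (n - t) = n + t + 1 by omega] at hcirc
  exact (cycleGraph_pow_adj_iff h x y).trans hcirc.symm
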